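/- arXiv:2512.07994 — 6 statements merged into one kernel-verified Lean document; each statement's English description precedes it below -/
import Mathlib

section
/- In FOLP□, if y ∉ X then □_X Φ ↔ □_X ∀y Φ is a theorem. The left-to-right direction uses axiom (A7'), and the right-to-left direction is derivable from (A3'), necessitation, normality (A4') and positive introspection (A6'). -/
/-! # Syntax of FOLP□ -/

/-- Justification terms. -/
inductive JTerm : Type
  | jvar : ℕ → JTerm
  | jconst : ℕ → JTerm
  | app : JTerm → JTerm → JTerm
  | plus : JTerm → JTerm → JTerm
  | bang : JTerm → JTerm
  | gen : ℕ → JTerm → JTerm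
  deriving DecidableEq

/-- `gen`-indexes occurring in a justification term. -/
def JTerm.ivars : JTerm → Finset ℕ
  | .jvar _ => ∅
  | .jconst _ => ∅
  | .app t s => t.ivars ∪ s.ivars
  | .plus t s => t.ivars ∪ s.ivars
  | .bang t => t.ivars
  | .gen x t => insert x t.ivars

/-- Formulas of FOLP□ (individual variables are natural numbers). -/
inductive Fm : Type
  | atom : ℕ → List ℕ → Fm
  | neg : Fm → Fm
  | and : Fm → Fm → Fm
  | imp : Fm → Fm → Fm
  | iff : Fm → Fm → Fm
  | all : ℕ → Fm → Fm
  | box : Finset ℕ → Fm → Fm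
  | just : JTerm → Finset ℕ → Fm → Fm
  deriving DecidableEq

/-- Free individual variables. -/
def Fm.FV : Fm → Finset ℕ
  | .atom _ l => l.toFinset
  | .neg φ => φ.FV
  | .and φ ψ => φ.FV ∪ ψ.FV
  | .imp φ ψ => φ.FV ∪ ψ.FV
  | .iff φ ψ => φ.FV ∪ ψ.FV
  | .all x φ => φ.FV.erase x
  | .box X _ => X
  | .just _ X _ => X

/-- Variables with bound occurrences (including `gen` indexes). -/
def Fm.BV : Fm → Finset ℕ
  | .atom _ _ => ∅
  | .neg φ => φ.BV
  | .and φ ψ => φ.BV ∪ ψ.BV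
  | .imp φ ψ => φ.BV ∪ ψ.BV
  | .iff φ ψ => φ.BV ∪ ψ.BV
  | .all x φ => insert x φ.BV
  | .box X φ => (φ.FV \ X) ∪ φ.BV
  | .just t X φ => (φ.FV \ X) ∪ φ.BV ∪ t.ivars

/-- All variables occurring in a formula. -/
def Fm.vars : Fm → Finset ℕ
  | .atom _ l => l.toFinset
  | .neg φ => φ.vars
  | .and φ ψ => φ.vars ∪ ψ.vars
  | .imp φ ψ => φ.vars ∪ ψ.vars
  | .iff φ ψ => φ.vars ∪ ψ.vars
  | .all x φ => insert x φ.vars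
  | .box X φ => X ∪ φ.vars
  | .just t X φ => X ∪ φ.vars ∪ t.ivars

/-- Renaming of free individual variables. -/
def Fm.rename : (ℕ → ℕ) → Fm → Fm
  | σ, .atom P l => .atom P (l.map σ)
  | σ, .neg φ => .neg (φ.rename σ)
  | σ, .and φ ψ => .and (φ.rename σ) (ψ.rename σ)
  | σ, .imp φ ψ => .imp (φ.rename σ) (ψ.rename σ)
  | σ, .iff φ ψ => .iff (φ.rename σ) (ψ.rename σ)
  | σ, .all x φ => .all x (φ.rename (Function.update σ x x))
  | σ, .box X φ => .box (X.image σ) (φ.rename fun z => if z ∈ X then σ z else z)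
  | σ, .just t X φ => .just t (X.image σ) (φ.rename fun z => if z ∈ X then σ z else z)

/-- Substituting variable `v` for the free occurrences of `x`. -/
def Fm.subst1 (x v : ℕ) (φ : Fm) : Fm := φ.rename fun z => if z = x then v else z

/-- The renaming `σ` causes no collision (capture) of variables in `φ`. -/
def Admissible : (ℕ → ℕ) → Fm → Prop
  | _, .atom _ _ => True
  | σ, .neg φ => Admissible σ φ
  | σ, .and φ ψ => Admissible σ φ ∧ Admissible σ ψ
  | σ, .imp φ ψ => Admissible σ φ ∧ Admissible σ ψ
  | σ, .iff φ ψ => Admissible σ φ ∧ Admissible σ ψ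
  | σ, .all x φ => Admissible (Function.update σ x x) φ ∧ ∀ z ∈ (Fm.all x φ).FV, σ z ≠ x
  | σ, .box X φ => Admissible (fun z => if z ∈ X then σ z else z) φ ∧
      ∀ z ∈ X, σ z ∈ X ∨ σ z ∉ φ.FV
  | σ, .just _ X φ => Admissible (fun z => if z ∈ X then σ z else z) φ ∧
      ∀ z ∈ X, σ z ∈ X ∨ σ z ∉ φ.FV

/-- A fixed contradictory formula. -/
def FmBot : Fm := Fm.neg (Fm.imp (Fm.atom 0 []) (Fm.atom 0 []))

/-! # Axioms and derivability -/

/-- Axioms of FOLP□₀: classical first-order axioms (A0) together with (A1)–(A8)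
and (A1')–(A7'). -/
inductive FAxiom : Fm → Prop
  -- (A0) classical axioms of first-order logic
  | pK (φ ψ : Fm) : FAxiom (φ.imp (ψ.imp φ))
  | pS (φ ψ χ : Fm) : FAxiom ((φ.imp (ψ.imp χ)).imp ((φ.imp ψ).imp (φ.imp χ)))
  | pContra (φ ψ : Fm) : FAxiom ((φ.neg.imp ψ.neg).imp (ψ.imp φ))
  | andI (φ ψ : Fm) : FAxiom (φ.imp (ψ.imp (φ.and ψ)))
  | andE1 (φ ψ : Fm) : FAxiom ((φ.and ψ).imp φ)
  | andE2 (φ ψ : Fm) : FAxiom ((φ.and ψ).imp ψ)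
  | iffI (φ ψ : Fm) : FAxiom (((φ.imp ψ).and (ψ.imp φ)).imp (φ.iff ψ))
  | iffE1 (φ ψ : Fm) : FAxiom ((φ.iff ψ).imp (φ.imp ψ))
  | iffE2 (φ ψ : Fm) : FAxiom ((φ.iff ψ).imp (ψ.imp φ))
  | allE (x y : ℕ) (φ : Fm) : Admissible (fun z => if z = x then y else z) φ →
      FAxiom ((Fm.all x φ).imp (φ.subst1 x y))
  | allImp (x : ℕ) (φ ψ : Fm) :
      FAxiom ((Fm.all x (φ.imp ψ)).imp ((Fm.all x φ).imp (Fm.all x ψ)))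
  | allVac (x : ℕ) (φ : Fm) : x ∉ φ.FV → FAxiom (φ.imp (Fm.all x φ))
  -- (A1), (A1')
  | A1 (t : JTerm) (X : Finset ℕ) (y : ℕ) (φ : Fm) : y ∉ φ.FV →
      FAxiom ((Fm.just t (insert y X) φ).imp (Fm.just t X φ))
  | A1' (X : Finset ℕ) (y : ℕ) (φ : Fm) : y ∉ φ.FV →
      FAxiom ((Fm.box (insert y X) φ).imp (Fm.box X φ))
  -- (A2), (A2')
  | A2 (t : JTerm) (X : Finset ℕ) (y : ℕ) (φ : Fm) :
      FAxiom ((Fm.just t X φ).imp (Fm.just t (insert y X) φ))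
  | A2' (X : Finset ℕ) (y : ℕ) (φ : Fm) :
      FAxiom ((Fm.box X φ).imp (Fm.box (insert y X) φ))
  -- (A3), (A3')
  | A3 (t : JTerm) (X : Finset ℕ) (φ : Fm) : FAxiom ((Fm.just t X φ).imp φ)
  | A3' (X : Finset ℕ) (φ : Fm) : FAxiom ((Fm.box X φ).imp φ)
  -- (A4), (A4')
  | A4 (t s : JTerm) (X : Finset ℕ) (φ ψ : Fm) :
      FAxiom ((Fm.just t X (φ.imp ψ)).imp ((Fm.just s X φ).imp (Fm.just (t.app s) X ψ)))
  | A4' (X : Finset ℕ) (φ ψ : Fm) :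
      FAxiom ((Fm.box X (φ.imp ψ)).imp ((Fm.box X φ).imp (Fm.box X ψ)))
  -- (A5)
  | A5l (t s : JTerm) (X : Finset ℕ) (φ : Fm) :
      FAxiom ((Fm.just t X φ).imp (Fm.just (t.plus s) X φ))
  | A5r (t s : JTerm) (X : Finset ℕ) (φ : Fm) :
      FAxiom ((Fm.just s X φ).imp (Fm.just (t.plus s) X φ))
  -- (A6), (A6')
  | A6 (t : JTerm) (X : Finset ℕ) (φ : Fm) :
      FAxiom ((Fm.just t X φ).imp (Fm.just t.bang X (Fm.just t X φ)))
  | A6' (X : Finset ℕ) (φ : Fm) : FAxiom ((Fm.box X φ).imp (Fm.box X (Fm.box X φ)))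
  -- (A7), (A7')
  | A7 (t : JTerm) (X : Finset ℕ) (x : ℕ) (φ : Fm) : x ∉ X →
      FAxiom ((Fm.just t X φ).imp (Fm.just (JTerm.gen x t) X (Fm.all x φ)))
  | A7' (X : Finset ℕ) (x : ℕ) (φ : Fm) : x ∉ X →
      FAxiom ((Fm.box X φ).imp (Fm.box X (Fm.all x φ)))
  -- (A8)
  | A8 (t : JTerm) (X : Finset ℕ) (φ : Fm) :
      FAxiom ((Fm.just t X φ).imp (Fm.box X φ))

/-- `CS` is a constant specification: a set of formulas `c:_∅ Φ` with `Φ` an axiom. -/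
def IsCS (CS : Set Fm) : Prop :=
  ∀ φ ∈ CS, ∃ (c : ℕ) (ψ : Fm), φ = Fm.just (JTerm.jconst c) ∅ ψ ∧ FAxiom ψ

/-- Derivability from hypotheses `Γ` with constant specification `CS`; `V` is the
set of variables to which the generalization rule may *not* be applied (for the
extended language 𝓛(V), take `V` the set of added free variables; for the basic
language take `V = ∅`).  Generalization is applied only to variables not free in
the hypotheses, and necessitation only to theorems (equivalently, axioms). -/
inductive Deriv (CS : Set Fm) (V : Set ℕ) : Set Fm → Fm → Prop
  | hyp {Γ φ} : φ ∈ Γ → Deriv CS V Γ φ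
  | ax {Γ φ} : FAxiom φ → Deriv CS V Γ φ
  | cs {Γ φ} : φ ∈ CS → Deriv CS V Γ φ
  | mp {Γ φ ψ} : Deriv CS V Γ (φ.imp ψ) → Deriv CS V Γ φ → Deriv CS V Γ ψ
  | gen {Γ φ x} : x ∉ V → (∀ ψ ∈ Γ, x ∉ ψ.FV) → Deriv CS V Γ φ →
      Deriv CS V Γ (Fm.all x φ)
  | nec {Γ φ} : Deriv CS V ∅ φ → Deriv CS V Γ (Fm.box ∅ φ)

/-- A variant-closed constant specification. -/
def VariantClosed (CS : Set Fm) : Prop :=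
  ∀ (c : ℕ) (φ : Fm) (σ : ℕ → ℕ), Admissible σ φ →
    (Fm.just (JTerm.jconst c) ∅ φ ∈ CS ↔ Fm.just (JTerm.jconst c) ∅ (φ.rename σ) ∈ CS)

/-! # Fitting models -/

/-- Finite valuations of individual variables. -/
structure FinVal (Obj : Type) where
  dom : Finset ℕ
  val : ℕ → Obj

namespace FinVal

variable {Obj : Type}

/-- The image of a finite valuation. -/
def Im (f : FinVal Obj) : Set Obj := f.val '' ↑f.dom

/-- Restriction `f ↾ Y`. -/
def restrict (f : FinVal Obj) (Y : Finset ℕ) : FinVal Obj := ⟨f.dom ∩ Y, f.val⟩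

/-- `g` is an extension of `f`. -/
def Ext (f g : FinVal Obj) : Prop := f.dom ⊆ g.dom ∧ ∀ x ∈ f.dom, g.val x = f.val x

/-- Composition `f ∘ σ` of `f` with a substitution `σ` defined on `X`. -/
def comp (f : FinVal Obj) (σ : ℕ → ℕ) (X : Finset ℕ) : FinVal Obj :=
  ⟨X.filter fun x => σ x ∈ f.dom, f.val ∘ σ⟩

/-- The finite valuation obtained by restricting `ν` to a finite `X`. -/
def ofFun (ν : ℕ → Obj) (X : Finset ℕ) : FinVal Obj := ⟨X, ν⟩

end FinVal

/-- The data of a Fitting model (conditions are imposed by `IsFitting`). -/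
structure PreModel (Obj : Type) where
  W : Type
  R : W → W → Prop
  D : W → Set Obj
  I : ℕ → W → Set (List Obj)
  E : JTerm → Fm → FinVal Obj → Set W

/-- Truth at a world of a pre-model, under a (total) valuation. -/
def Sat {Obj : Type} (M : PreModel Obj) : Fm → (ℕ → Obj) → M.W → Prop
  | .atom P l, ν, w => l.map ν ∈ M.I P w
  | .neg φ, ν, w => (∀ x ∈ φ.FV, ν x ∈ M.D w) ∧ ¬ Sat M φ ν w
  | .and φ ψ, ν, w => Sat M φ ν w ∧ Sat M ψ ν w
  | .imp φ ψ, ν, w => (∀ x ∈ φ.FV ∪ ψ.FV, ν x ∈ M.D w) ∧ (Sat M φ ν w → Sat M ψ ν w)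
  | .iff φ ψ, ν, w => (∀ x ∈ φ.FV ∪ ψ.FV, ν x ∈ M.D w) ∧ (Sat M φ ν w ↔ Sat M ψ ν w)
  | .all x φ, ν, w => ∀ a ∈ M.D w, Sat M φ (Function.update ν x a) w
  | .box X φ, ν, w =>
      (∀ x ∈ X, ν x ∈ M.D w) ∧
      ∀ u, M.R w u → ∀ μ : ℕ → Obj, (∀ x, x ∉ φ.FV \ X → μ x = ν x) →
        (∀ x ∈ φ.FV \ X, μ x ∈ M.D u) → Sat M φ μ u
  | .just t X φ, ν, w =>
      (∀ x ∈ X, ν x ∈ M.D w) ∧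
      (∀ u, M.R w u → ∀ μ : ℕ → Obj, (∀ x, x ∉ φ.FV \ X → μ x = ν x) →
        (∀ x ∈ φ.FV \ X, μ x ∈ M.D u) → Sat M φ μ u) ∧
      w ∈ M.E t φ (FinVal.ofFun ν (φ.FV ∩ X))

/-- The conditions on an evidence function. -/
def EvidenceOK {Obj : Type} (M : PreModel Obj) : Prop :=
  -- adequacy
  (∀ t φ f w, w ∈ M.E t φ f → ∀ x ∈ f.dom, f.val x ∈ M.D w) ∧
  -- substitution
  (∀ t φ (σ : ℕ → ℕ) (f : FinVal Obj), Admissible σ φ →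
      M.E t (φ.rename σ) (f.restrict (φ.rename σ).FV) = M.E t φ (f.comp σ φ.FV)) ∧
  -- R-closure
  (∀ t φ f w u, M.R w u → w ∈ M.E t φ f → u ∈ M.E t φ f) ∧
  -- extension
  (∀ t φ f g w, w ∈ M.E t φ f → FinVal.Ext f g → g.Im ⊆ M.D w → w ∈ M.E t φ g) ∧
  -- restriction
  (∀ t φ f, M.E t φ f ⊆ M.E t φ (f.restrict φ.FV)) ∧
  -- · condition
  (∀ t s φ ψ f, M.E t (φ.imp ψ) f ∩ M.E s φ f ⊆ M.E (t.app s) ψ f) ∧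
  -- + condition
  (∀ t s φ f, M.E t φ f ∪ M.E s φ f ⊆ M.E (t.plus s) φ f) ∧
  -- ! condition
  (∀ t φ f g (X : Finset ℕ) w, w ∈ M.E t φ f → FinVal.Ext f g → g.Im ⊆ M.D w →
      f.dom ∩ φ.FV ⊆ X → X ⊆ g.dom → w ∈ M.E t.bang (Fm.just t X φ) g) ∧
  -- gen_x condition
  (∀ t φ f (x : ℕ), x ∉ f.dom ∩ φ.FV → M.E t φ f ⊆ M.E (JTerm.gen x t) (Fm.all x φ) f)

/-- A Fitting model: reflexive transitive frame, monotone nonempty domains,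
adequate interpretation, evidence function satisfying all conditions. -/
def IsFitting {Obj : Type} (M : PreModel Obj) : Prop :=
  Nonempty M.W ∧
  (∀ w, M.R w w) ∧
  (∀ w u v, M.R w u → M.R u v → M.R w v) ∧
  (∀ w, (M.D w).Nonempty) ∧
  (∀ w u, M.R w u → M.D w ⊆ M.D u) ∧
  (∀ P w l, l ∈ M.I P w → ∀ a ∈ l, a ∈ M.D w) ∧
  EvidenceOK M

/-- The model meets the constant specification `CS`. -/
def MeetsCS {Obj : Type} (M : PreModel Obj) (CS : Set Fm) : Prop :=
  ∀ (c : ℕ) (φ : Fm), Fm.just (JTerm.jconst c) ∅ φ ∈ CS →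
    ∀ f : FinVal Obj, f.dom = ∅ → M.E (JTerm.jconst c) φ f = Set.univ

/-- `Φ` is true in the model `M`. -/
def TrueIn {Obj : Type} (M : PreModel Obj) (φ : Fm) : Prop :=
  ∀ (ν : ℕ → Obj) (w : M.W), (∀ x ∈ φ.FV, ν x ∈ M.D w) → Sat M φ ν w

/-! # The canonical model -/

/-- The original individual variables `Var` (even numbers). -/
def VarBase : Set ℕ := {n | Even n}

/-- The additional variables `Var⁺` (odd numbers). -/
def VarPlus : Set ℕ := {n | ¬ Even n}

/-- A `V`-closed formula: all occurrences of variables from `V` are free,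
all occurrences of variables from `Var` are bound, and `V`-variables do not
occur as `gen` indexes. -/
def Vclosed (V : Set ℕ) (φ : Fm) : Prop :=
  (↑φ.FV ⊆ V) ∧ ∀ x ∈ φ.BV, x ∉ V

/-- The universal closure `∀ y₁ … ∀ yₙ Φ` over the `Var`-variables free in `Φ`. -/
def allClosure (φ : Fm) : Fm :=
  ((φ.FV.filter fun n => Even n).sort (· ≤ ·)).foldr Fm.all φ

/-- `S^#`: the universal closures of the `□`-prefixed members of `S`. -/
def sharpOf (S : Set Fm) : Set Fm :=
  {ψ | ∃ (X : Finset ℕ) (φ : Fm), Fm.box X φ ∈ S ∧ ψ = allClosure φ}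

/-- A world of the canonical model: a pair `(S, V)` with `S` an
`𝓛ʰ(V)`-maximal, `𝓛(V)`-consistent (using `CS`), `∃`-complete set of
`V`-closed formulas. -/
structure CWorld (CS : Set Fm) where
  V : Set ℕ
  S : Set Fm
  hV : V ⊆ VarPlus
  hVinf : V.Infinite
  hVcoinf : (VarPlus \ V).Infinite
  hclosed : ∀ φ ∈ S, Vclosed V φ
  hmax : ∀ φ, Vclosed V φ → φ ∈ S ∨ Fm.neg φ ∈ S
  hcons : ¬ Deriv CS V S FmBot
  hex : ∀ (x : ℕ) (φ : Fm), Fm.neg (Fm.all x φ) ∈ S → ∃ v ∈ V, Fm.neg (φ.subst1 x v) ∈ S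

/-- The canonical accessibility relation. -/
def Rc {CS : Set Fm} (Γ Δ : CWorld CS) : Prop := Γ.V ⊆ Δ.V ∧ sharpOf Γ.S ⊆ Δ.S

/-- Applying a finite valuation (into variables) to a formula. -/
def applyVal (f : FinVal ℕ) (φ : Fm) : Fm :=
  φ.rename fun x => if x ∈ f.dom then f.val x else x

/-- The canonical evidence function. -/
def canE (CS : Set Fm) : JTerm → Fm → FinVal ℕ → Set (CWorld CS) :=
  fun t φ f => {Γ | f.Im ⊆ Γ.V ∧ applyVal f (Fm.just t (f.dom ∩ φ.FV) φ) ∈ Γ.S}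

/-- The canonical (pre-)model. -/
def canPre (CS : Set Fm) : PreModel ℕ where
  W := CWorld CS
  R := Rc
  D := fun Γ => Γ.V
  I := fun P Γ => {l | Fm.atom P l ∈ Γ.S}
  E := canE CS

/-- A canonical valuation: the identity on `Var⁺`. -/
def CanonicalVal (ν : ℕ → ℕ) : Prop := ∀ x ∈ VarPlus, ν x = x

/-- Simultaneous renaming determined by two lists (`ys ↦ vs`). -/
def renList (ys vs : List ℕ) : ℕ → ℕ :=
  fun z => ((ys.zip vs).lookup z).getD z

lemma Fm.rename_eq_self (φ : Fm) : ∀ σ : ℕ → ℕ, (∀ z, σ z = z) → φ.rename σ = φ := by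
  induction φ with
  | atom P l =>
      intro σ hσ
      have : σ = id := funext hσ
      simp [Fm.rename, this]
  | neg φ ih => intro σ hσ; simp [Fm.rename, ih σ hσ]
  | and φ ψ ihφ ihψ => intro σ hσ; simp [Fm.rename, ihφ σ hσ, ihψ σ hσ]
  | imp φ ψ ihφ ihψ => intro σ hσ; simp [Fm.rename, ihφ σ hσ, ihψ σ hσ]
  | iff φ ψ ihφ ihψ => intro σ hσ; simp [Fm.rename, ihφ σ hσ, ihψ σ hσ]
  | all x φ ih =>
      intro σ hσ
      have h' : ∀ z, Function.update σ x x z = z := by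
        intro z
        by_cases hz : z = x <;> simp [Function.update, hz, hσ z]
      simp [Fm.rename, ih _ h']
  | box X φ ih =>
      intro σ hσ
      have h' : ∀ z, (if z ∈ X then σ z else z) = z := by
        intro z; split <;> simp [hσ z]
      have himg : X.image σ = X := by
        have : σ = id := funext hσ
        simp [this]
      simp [Fm.rename, ih _ h', himg]
  | just t X φ ih =>
      intro σ hσ
      have h' : ∀ z, (if z ∈ X then σ z else z) = z := by
        intro z; split <;> simp [hσ z]
      have himg : X.image σ = X := by
        have : σ = id := funext hσ
        simp [this]
      simp [Fm.rename, ih _ h', himg]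

lemma Admissible_of_id (φ : Fm) : ∀ σ : ℕ → ℕ, (∀ z, σ z = z) → Admissible σ φ := by
  induction φ with
  | atom P l => intro σ hσ; trivial
  | neg φ ih => intro σ hσ; exact ih σ hσ
  | and φ ψ ihφ ihψ => intro σ hσ; exact ⟨ihφ σ hσ, ihψ σ hσ⟩
  | imp φ ψ ihφ ihψ => intro σ hσ; exact ⟨ihφ σ hσ, ihψ σ hσ⟩
  | iff φ ψ ihφ ihψ => intro σ hσ; exact ⟨ihφ σ hσ, ihψ σ hσ⟩
  | all x φ ih =>
      intro σ hσ
      have h' : ∀ z, Function.update σ x x z = z := by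
        intro z
        by_cases hz : z = x <;> simp [Function.update, hz, hσ z]
      refine ⟨ih _ h', ?_⟩
      intro z hz
      simp [Fm.FV] at hz
      rw [hσ z]
      exact hz.1
  | box X φ ih =>
      intro σ hσ
      have h' : ∀ z, (if z ∈ X then σ z else z) = z := by
        intro z; split <;> simp [hσ z]
      exact ⟨ih _ h', fun z hz => Or.inl (by rw [hσ z]; exact hz)⟩
  | just t X φ ih =>
      intro σ hσ
      have h' : ∀ z, (if z ∈ X then σ z else z) = z := by
        intro z; split <;> simp [hσ z]
      exact ⟨ih _ h', fun z hz => Or.inl (by rw [hσ z]; exact hz)⟩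

/-- Lifting `□_∅` to `□_X` by repeated (A2'). -/
lemma box_mono (CS : Set Fm) (X : Finset ℕ) (φ : Fm)
    (h : Deriv CS ∅ ∅ (Fm.box ∅ φ)) : Deriv CS ∅ ∅ (Fm.box X φ) := by
  induction X using Finset.induction_on with
  | empty => exact h
  | insert _ _ hx ih => exact Deriv.mp (Deriv.ax (FAxiom.A2' _ _ _)) ih

/-- `⊢ ∀y Φ → Φ`. -/
lemma all_elim_self (CS : Set Fm) (y : ℕ) (Φ : Fm) :
    Deriv CS ∅ ∅ ((Fm.all y Φ).imp Φ) := by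
  have hσ : ∀ z, (if z = y then y else z) = z := by intro z; split <;> simp_all
  have hadm : Admissible (fun z => if z = y then y else z) Φ :=
    Admissible_of_id Φ _ hσ
  have := Deriv.ax (CS := CS) (V := ∅) (Γ := ∅) (FAxiom.allE y y Φ hadm)
  rwa [Fm.subst1, Fm.rename_eq_self Φ _ hσ] at this

/-- if `y ∉ X` then `□_X Φ ↔ □_X ∀y Φ` is a theorem of FOLP□₀
(left-to-right by (A7'), right-to-left from (A3'), necessitation, (A4'), (A6')). -/
theorem box_iff_box_all (CS : Set Fm) (X : Finset ℕ) (y : ℕ) (Φ : Fm) (hy : y ∉ X) :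
    Deriv CS ∅ ∅ ((Fm.box X Φ).iff (Fm.box X (Fm.all y Φ))) := by
  -- left-to-right: (A7')
  have h1 : Deriv CS ∅ ∅ ((Fm.box X Φ).imp (Fm.box X (Fm.all y Φ))) :=
    Deriv.ax (FAxiom.A7' X y Φ hy)
  -- right-to-left
  have h2 : Deriv CS ∅ ∅ ((Fm.box X (Fm.all y Φ)).imp (Fm.box X Φ)) := by
    have hbox : Deriv CS ∅ ∅ (Fm.box X ((Fm.all y Φ).imp Φ)) :=
      box_mono CS X _ (Deriv.nec (all_elim_self CS y Φ))
    exact Deriv.mp (Deriv.ax (FAxiom.A4' X (Fm.all y Φ) Φ)) hbox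
  -- combine via andI and iffI
  have hand : Deriv CS ∅ ∅
      (((Fm.box X Φ).imp (Fm.box X (Fm.all y Φ))).and
        ((Fm.box X (Fm.all y Φ)).imp (Fm.box X Φ))) :=
    Deriv.mp (Deriv.mp (Deriv.ax (FAxiom.andI _ _)) h1) h2
  exact Deriv.mp (Deriv.ax (FAxiom.iffI _ _)) hand
end

section
/- Internalization for FOLP□: if p₁:_{X₁}Φ₁, …, pₙ:_{Xₙ}Φₙ ⊢_CS Φ (derivation from hypotheses with constant specification CS, where generalization is not applied to variables free in the hypotheses and necessitation is applied only to axioms), then there exists a justification term t(p₁,…,pₙ) and a constant specification CS' ⊇ CS such that p₁:_{X₁}Φ₁, …, pₙ:_{Xₙ}Φₙ ⊢_{CS'} t(p₁,…,pₙ):_X Φ, where X = X₁ ∪ … ∪ Xₙ. -/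
/-- The extended constant specification: add a constant `0` justifying every axiom. -/
def CSx (CS : Set Fm) : Set Fm :=
  CS ∪ {φ | ∃ ψ, FAxiom ψ ∧ φ = Fm.just (JTerm.jconst 0) ∅ ψ}

lemma isCS_CSx {CS : Set Fm} (hCS : IsCS CS) : IsCS (CSx CS) := by
  intro φ hφ
  rcases hφ with hφ | ⟨ψ, hψ, rfl⟩
  · exact hCS φ hφ
  · exact ⟨0, ψ, rfl, hψ⟩

/-- Derivations using only axioms, constant specification, and modus ponens. -/
inductive MPD (CS : Set Fm) : Fm → Prop
  | ax {φ} : FAxiom φ → MPD CS φ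
  | cs {φ} : φ ∈ CS → MPD CS φ
  | mp {φ ψ} : MPD CS (φ.imp ψ) → MPD CS φ → MPD CS ψ

lemma MPD.toDeriv {CS : Set Fm} {V : Set ℕ} {Γ : Set Fm} {φ : Fm}
    (h : MPD CS φ) : Deriv CS V Γ φ := by
  induction h with
  | ax h => exact .ax h
  | cs h => exact .cs h
  | mp _ _ ih1 ih2 => exact .mp ih1 ih2

/-- Repeated application of (A2): extending the binding index. -/
lemma extendIdxMPD {CS : Set Fm} {t : JTerm} {φ : Fm} {Y X : Finset ℕ}
    (hYX : Y ⊆ X) (h : MPD CS (Fm.just t Y φ)) : MPD CS (Fm.just t X φ) := by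
  have main : ∀ S : Finset ℕ, MPD CS (Fm.just t (Y ∪ S) φ) := by
    intro S
    induction S using Finset.induction_on with
    | empty => simpa using h
    | @insert a S ha ih =>
        have := MPD.mp (MPD.ax (FAxiom.A2 t (Y ∪ S) a φ)) ih
        rwa [← Finset.union_insert] at this
  have := main X
  rwa [Finset.union_eq_right.mpr hYX] at this

/-- Internalization for theorems (empty hypothesis set). -/
lemma internalize_empty {CS : Set Fm} (hCS : IsCS CS) :
    ∀ Γ Φ, Deriv CS ∅ Γ Φ → Γ = ∅ →
      ∃ t, MPD (CSx CS) (Fm.just t ∅ Φ) := by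
  intro Γ Φ h
  induction h with
  | @hyp Γ φ hmem =>
      intro hΓ; rw [hΓ] at hmem; exact absurd hmem (Set.notMem_empty φ)
  | ax hφ =>
      intro _
      exact ⟨JTerm.jconst 0, MPD.cs (Or.inr ⟨_, hφ, rfl⟩)⟩
  | @cs Γ φ hφ =>
      intro _
      obtain ⟨c, ψ, rfl, hψ⟩ := hCS φ hφ
      exact ⟨(JTerm.jconst c).bang,
        MPD.mp (MPD.ax (FAxiom.A6 (JTerm.jconst c) ∅ ψ)) (MPD.cs (Or.inl hφ))⟩
  | @mp Γ φ ψ h1 h2 ih1 ih2 =>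
      intro hΓ
      obtain ⟨t1, H1⟩ := ih1 hΓ
      obtain ⟨t2, H2⟩ := ih2 hΓ
      exact ⟨t1.app t2, MPD.mp (MPD.mp (MPD.ax (FAxiom.A4 t1 t2 ∅ φ ψ)) H1) H2⟩
  | @gen Γ φ x hx hfv h ih =>
      intro hΓ
      obtain ⟨t, H⟩ := ih hΓ
      exact ⟨JTerm.gen x t,
        MPD.mp (MPD.ax (FAxiom.A7 t ∅ x φ (by simp))) H⟩
  | @nec Γ φ h ih =>
      intro _
      obtain ⟨s, H⟩ := ih rfl
      refine ⟨(JTerm.jconst 0).app s.bang, ?_⟩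
      have hb : MPD (CSx CS) (Fm.just s.bang ∅ (Fm.just s ∅ φ)) :=
        MPD.mp (MPD.ax (FAxiom.A6 s ∅ φ)) H
      have hc : MPD (CSx CS)
          (Fm.just (JTerm.jconst 0) ∅ ((Fm.just s ∅ φ).imp (Fm.box ∅ φ))) :=
        MPD.cs (Or.inr ⟨_, FAxiom.A8 s ∅ φ, rfl⟩)
      exact MPD.mp
        (MPD.mp (MPD.ax (FAxiom.A4 (JTerm.jconst 0) s.bang ∅ _ _)) hc) hb

/-- Internalization for FOLP□ with hypotheses
`p₁:_{X₁}Φ₁, …, pₙ:_{Xₙ}Φₙ`. -/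
theorem internalization (CS : Set Fm) (hCS : IsCS CS)
    (n : ℕ) (p : Fin n → ℕ) (Xs : Fin n → Finset ℕ) (Φs : Fin n → Fm) (Φ : Fm)
    (h : Deriv CS ∅ {ψ | ∃ i : Fin n, ψ = Fm.just (JTerm.jvar (p i)) (Xs i) (Φs i)} Φ) :
    ∃ (t : JTerm) (CS' : Set Fm), CS ⊆ CS' ∧ IsCS CS' ∧
      Deriv CS' ∅ {ψ | ∃ i : Fin n, ψ = Fm.just (JTerm.jvar (p i)) (Xs i) (Φs i)}
        (Fm.just t (Finset.univ.biUnion Xs) Φ) := by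
  classical
  set Γ₀ : Set Fm :=
    {ψ | ∃ i : Fin n, ψ = Fm.just (JTerm.jvar (p i)) (Xs i) (Φs i)} with hΓ₀
  set X : Finset ℕ := Finset.univ.biUnion Xs with hX
  have key : ∀ Γ Φ', Deriv CS ∅ Γ Φ' → Γ = Γ₀ →
      ∃ t, Deriv (CSx CS) ∅ Γ₀ (Fm.just t X Φ') := by
    intro Γ Φ' h'
    induction h' with
    | @hyp Γ φ hmem =>
        intro hΓ
        rw [hΓ] at hmem
        obtain ⟨i, rfl⟩ := hmem
        refine ⟨(JTerm.jvar (p i)).bang, ?_⟩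
        have h1 : Deriv (CSx CS) ∅ Γ₀
            (Fm.just (JTerm.jvar (p i)).bang (Xs i)
              (Fm.just (JTerm.jvar (p i)) (Xs i) (Φs i))) :=
          Deriv.mp (Deriv.ax (FAxiom.A6 (JTerm.jvar (p i)) (Xs i) (Φs i)))
            (Deriv.hyp ⟨i, rfl⟩)
        have : ∀ S : Finset ℕ, Deriv (CSx CS) ∅ Γ₀
            (Fm.just (JTerm.jvar (p i)).bang (Xs i ∪ S)
              (Fm.just (JTerm.jvar (p i)) (Xs i) (Φs i))) := by
          intro S
          induction S using Finset.induction_on with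
          | empty => simpa using h1
          | @insert a S ha ih =>
              have := Deriv.mp (Deriv.ax (FAxiom.A2 _ (Xs i ∪ S) a _)) ih
              rwa [← Finset.union_insert] at this
        have h2 := this X
        rwa [Finset.union_eq_right.mpr (Finset.subset_biUnion_of_mem Xs
          (Finset.mem_univ i))] at h2
    | @ax Γ φ hφ =>
        intro hΓ
        refine ⟨JTerm.jconst 0, ?_⟩
        exact (extendIdxMPD (Finset.empty_subset X)
          (MPD.cs (Or.inr ⟨_, hφ, rfl⟩))).toDeriv
    | @cs Γ φ hφ =>
        intro hΓ
        obtain ⟨c, ψ, rfl, hψ⟩ := hCS _ hφ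
        refine ⟨(JTerm.jconst c).bang, ?_⟩
        exact (extendIdxMPD (Finset.empty_subset X)
          (MPD.mp (MPD.ax (FAxiom.A6 (JTerm.jconst c) ∅ ψ))
            (MPD.cs (Or.inl hφ)))).toDeriv
    | @mp Γ φ ψ h1 h2 ih1 ih2 =>
        intro hΓ
        obtain ⟨t1, H1⟩ := ih1 hΓ
        obtain ⟨t2, H2⟩ := ih2 hΓ
        exact ⟨t1.app t2,
          Deriv.mp (Deriv.mp (Deriv.ax (FAxiom.A4 t1 t2 X φ ψ)) H1) H2⟩
    | @gen Γ φ x hx hfv h ih =>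
        intro hΓ
        obtain ⟨t, H⟩ := ih hΓ
        have hxX : x ∉ X := by
          simp only [hX, Finset.mem_biUnion, Finset.mem_univ, true_and]
          rintro ⟨i, hi⟩
          have hmem : Fm.just (JTerm.jvar (p i)) (Xs i) (Φs i) ∈ Γ := by
            rw [hΓ]; exact ⟨i, rfl⟩
          exact hfv _ hmem (by simpa [Fm.FV] using hi)
        exact ⟨JTerm.gen x t, Deriv.mp (Deriv.ax (FAxiom.A7 t X x φ hxX)) H⟩
    | @nec Γ φ h ih =>
        intro hΓ
        obtain ⟨s, H⟩ := internalize_empty hCS ∅ φ h rfl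
        refine ⟨(JTerm.jconst 0).app s.bang, ?_⟩
        have hb : MPD (CSx CS) (Fm.just s.bang ∅ (Fm.just s ∅ φ)) :=
          MPD.mp (MPD.ax (FAxiom.A6 s ∅ φ)) H
        have hc : MPD (CSx CS)
            (Fm.just (JTerm.jconst 0) ∅ ((Fm.just s ∅ φ).imp (Fm.box ∅ φ))) :=
          MPD.cs (Or.inr ⟨_, FAxiom.A8 s ∅ φ, rfl⟩)
        have hfin : MPD (CSx CS)
            (Fm.just ((JTerm.jconst 0).app s.bang) ∅ (Fm.box ∅ φ)) :=
          MPD.mp (MPD.mp (MPD.ax (FAxiom.A4 (JTerm.jconst 0) s.bang ∅ _ _)) hc) hb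
        exact (extendIdxMPD (Finset.empty_subset X) hfin).toDeriv
  obtain ⟨t, H⟩ := key Γ₀ Φ h rfl
  exact ⟨t, CSx CS, Set.subset_union_left, isCS_CSx hCS, H⟩
end

section
/- If ⊢_CS Φ in FOLP□, then there is a justification term t and a constant specification CS' ⊇ CS such that ⊢_{CS'} t:_∅ Φ. -/
/-- if `⊢_CS Φ` then `⊢_{CS'} t:_∅ Φ` for some justification term `t`
and some constant specification `CS' ⊇ CS`. -/
theorem internalization_closed (CS : Set Fm) (hCS : IsCS CS) (Φ : Fm)
    (h : Deriv CS ∅ ∅ Φ) :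
    ∃ (t : JTerm) (CS' : Set Fm), CS ⊆ CS' ∧ IsCS CS' ∧
      Deriv CS' ∅ ∅ (Fm.just t ∅ Φ) := by
  classical
  set CS' : Set Fm :=
    {φ | ∃ (c : ℕ) (ψ : Fm), φ = Fm.just (JTerm.jconst c) ∅ ψ ∧ FAxiom ψ} with hCS'def
  have hsub : CS ⊆ CS' := by
    intro φ hφ
    exact hCS φ hφ
  have hisCS : IsCS CS' := by
    intro φ hφ
    exact hφ
  have key : ∀ (Γ : Set Fm) (ψ : Fm), Deriv CS ∅ Γ ψ → Γ = ∅ →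
      ∃ t : JTerm, Deriv CS' ∅ ∅ (Fm.just t ∅ ψ) := by
    intro Γ ψ h
    induction h with
    | @hyp Γ φ hφ =>
        intro hΓ; subst hΓ; exact absurd hφ (Set.notMem_empty _)
    | @ax Γ φ hφ =>
        intro _
        exact ⟨JTerm.jconst 0, Deriv.cs ⟨0, φ, rfl, hφ⟩⟩
    | @cs Γ φ hφ =>
        intro _
        obtain ⟨c, χ, rfl, _⟩ := hCS _ hφ
        exact ⟨(JTerm.jconst c).bang,
          Deriv.mp (Deriv.ax (FAxiom.A6 (JTerm.jconst c) ∅ χ)) (Deriv.cs (hsub hφ))⟩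
    | @mp Γ φ χ h1 h2 ih1 ih2 =>
        intro hΓ
        obtain ⟨t, ht⟩ := ih1 hΓ
        obtain ⟨s, hs⟩ := ih2 hΓ
        exact ⟨t.app s, Deriv.mp (Deriv.mp (Deriv.ax (FAxiom.A4 t s ∅ φ χ)) ht) hs⟩
    | @gen Γ φ x hx hfv hd ih =>
        intro hΓ
        obtain ⟨t, ht⟩ := ih hΓ
        exact ⟨JTerm.gen x t,
          Deriv.mp (Deriv.ax (FAxiom.A7 t ∅ x φ (Finset.notMem_empty x))) ht⟩
    | @nec Γ φ hd ih =>
        intro _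
        obtain ⟨t, ht⟩ := ih rfl
        have hax : FAxiom ((Fm.just t ∅ φ).imp (Fm.box ∅ φ)) := FAxiom.A8 t ∅ φ
        have hc : Deriv CS' ∅ ∅
            (Fm.just (JTerm.jconst 0) ∅ ((Fm.just t ∅ φ).imp (Fm.box ∅ φ))) :=
          Deriv.cs ⟨0, _, rfl, hax⟩
        have hbang : Deriv CS' ∅ ∅ (Fm.just t.bang ∅ (Fm.just t ∅ φ)) :=
          Deriv.mp (Deriv.ax (FAxiom.A6 t ∅ φ)) ht
        exact ⟨(JTerm.jconst 0).app t.bang,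
          Deriv.mp (Deriv.mp
            (Deriv.ax (FAxiom.A4 (JTerm.jconst 0) t.bang ∅ (Fm.just t ∅ φ) (Fm.box ∅ φ))) hc)
            hbang⟩
  obtain ⟨t, ht⟩ := key ∅ Φ h rfl
  exact ⟨t, CS', hsub, hisCS, ht⟩
end

section
/- Substitution lemma for FOLP□: let σ be a substitution of individual variables for variables in FV(Γ, Φ) such that no variable collisions occur, and let CS be a variant-closed constant specification. If Φ₁,…,Φₙ ⊢_CS Φ, then Φ₁σ,…,Φₙσ ⊢_CS Φσ. -/
namespace SubstAux

open Fm

lemma FV_subset_vars (φ : Fm) : φ.FV ⊆ φ.vars := by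
  induction φ with
  | atom P l => simp [Fm.FV, Fm.vars]
  | neg φ ih => simpa [Fm.FV, Fm.vars] using ih
  | and φ ψ ih1 ih2 => exact Finset.union_subset_union ih1 ih2
  | imp φ ψ ih1 ih2 => exact Finset.union_subset_union ih1 ih2
  | iff φ ψ ih1 ih2 => exact Finset.union_subset_union ih1 ih2
  | all x φ ih =>
      intro z hz
      simp only [Fm.FV, Finset.mem_erase] at hz
      simp only [Fm.vars, Finset.mem_insert]
      exact Or.inr (ih hz.2)
  | box X φ ih => intro z hz; simp only [Fm.FV] at hz; simp [Fm.vars, hz]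
  | just t X φ ih => intro z hz; simp only [Fm.FV] at hz; simp [Fm.vars, hz]

lemma BV_subset_vars (φ : Fm) : φ.BV ⊆ φ.vars := by
  induction φ with
  | atom P l => simp [Fm.BV]
  | neg φ ih => simpa [Fm.BV, Fm.vars] using ih
  | and φ ψ ih1 ih2 => exact Finset.union_subset_union ih1 ih2
  | imp φ ψ ih1 ih2 => exact Finset.union_subset_union ih1 ih2
  | iff φ ψ ih1 ih2 => exact Finset.union_subset_union ih1 ih2
  | all x φ ih =>
      simp only [Fm.BV, Fm.vars]
      exact Finset.insert_subset_insert _ ih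
  | box X φ ih =>
      simp only [Fm.BV, Fm.vars]
      intro z hz
      rcases Finset.mem_union.1 hz with hz | hz
      · exact Finset.mem_union_right _ (FV_subset_vars φ (Finset.mem_sdiff.1 hz).1)
      · exact Finset.mem_union_right _ (ih hz)
  | just t X φ ih =>
      simp only [Fm.BV, Fm.vars]
      intro z hz
      rcases Finset.mem_union.1 hz with hz | hz
      · rcases Finset.mem_union.1 hz with hz | hz
        · exact Finset.mem_union_left _
            (Finset.mem_union_right _ (FV_subset_vars φ (Finset.mem_sdiff.1 hz).1))
        · exact Finset.mem_union_left _ (Finset.mem_union_right _ (ih hz))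
      · exact Finset.mem_union_right _ hz

lemma rename_congr {σ τ : ℕ → ℕ} : ∀ (φ : Fm), (∀ z ∈ φ.FV, σ z = τ z) →
    φ.rename σ = φ.rename τ := by
  intro φ
  induction φ generalizing σ τ with
  | atom P l =>
      intro h
      simp only [Fm.rename, Fm.atom.injEq, true_and]
      exact List.map_congr_left (fun z hz => h z (by simp [Fm.FV, hz]))
  | neg φ ih => intro h; simp only [Fm.rename]; rw [ih h]
  | and φ ψ ih1 ih2 =>
      intro h
      simp only [Fm.rename]
      rw [ih1 (fun z hz => h z (by simp [Fm.FV, hz])),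
        ih2 (fun z hz => h z (by simp [Fm.FV, hz]))]
  | imp φ ψ ih1 ih2 =>
      intro h
      simp only [Fm.rename]
      rw [ih1 (fun z hz => h z (by simp [Fm.FV, hz])),
        ih2 (fun z hz => h z (by simp [Fm.FV, hz]))]
  | iff φ ψ ih1 ih2 =>
      intro h
      simp only [Fm.rename]
      rw [ih1 (fun z hz => h z (by simp [Fm.FV, hz])),
        ih2 (fun z hz => h z (by simp [Fm.FV, hz]))]
  | all x φ ih =>
      intro h
      simp only [Fm.rename]
      rw [ih]
      intro z hz
      by_cases hzx : z = x
      · subst hzx; simp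
      · simp only [Function.update_apply, if_neg hzx]
        exact h z (by simp [Fm.FV, Finset.mem_erase, hzx, hz])
  | box X φ ih =>
      intro h
      simp only [Fm.rename]
      rw [Finset.image_congr (fun z hz => h z (by simpa [Fm.FV] using hz)), ih]
      intro z hz
      by_cases hzX : z ∈ X
      · simp only [if_pos hzX]; exact h z (by simpa [Fm.FV] using hzX)
      · simp [hzX]
  | just t X φ ih =>
      intro h
      simp only [Fm.rename]
      rw [Finset.image_congr (fun z hz => h z (by simpa [Fm.FV] using hz)), ih]
      intro z hz
      by_cases hzX : z ∈ X
      · simp only [if_pos hzX]; exact h z (by simpa [Fm.FV] using hzX)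
      · simp [hzX]

lemma rename_id' {σ : ℕ → ℕ} : ∀ (φ : Fm), (∀ z ∈ φ.FV, σ z = z) → φ.rename σ = φ := by
  intro φ
  induction φ generalizing σ with
  | atom P l =>
      intro h
      simp only [Fm.rename, Fm.atom.injEq, true_and]
      conv_rhs => rw [← List.map_id l]
      exact List.map_congr_left (fun z hz => h z (by simp [Fm.FV, hz]))
  | neg φ ih => intro h; simp only [Fm.rename]; rw [ih h]
  | and φ ψ ih1 ih2 =>
      intro h
      simp only [Fm.rename]
      rw [ih1 (fun z hz => h z (by simp [Fm.FV, hz])),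
        ih2 (fun z hz => h z (by simp [Fm.FV, hz]))]
  | imp φ ψ ih1 ih2 =>
      intro h
      simp only [Fm.rename]
      rw [ih1 (fun z hz => h z (by simp [Fm.FV, hz])),
        ih2 (fun z hz => h z (by simp [Fm.FV, hz]))]
  | iff φ ψ ih1 ih2 =>
      intro h
      simp only [Fm.rename]
      rw [ih1 (fun z hz => h z (by simp [Fm.FV, hz])),
        ih2 (fun z hz => h z (by simp [Fm.FV, hz]))]
  | all x φ ih =>
      intro h
      simp only [Fm.rename, Fm.all.injEq, true_and]
      apply ih
      intro z hz
      by_cases hzx : z = x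
      · subst hzx; simp
      · simp only [Function.update_apply, if_neg hzx]
        exact h z (by simp [Fm.FV, Finset.mem_erase, hzx, hz])
  | box X φ ih =>
      intro h
      simp only [Fm.rename]
      rw [ih ?_]
      rotate_left
      · intro z hz
        by_cases hzX : z ∈ X
        · simp only [if_pos hzX]; exact h z (by simpa [Fm.FV] using hzX)
        · simp [hzX]
      congr 1
      ext z
      simp only [Finset.mem_image]
      constructor
      · rintro ⟨y, hy, rfl⟩; rwa [h y (by simpa [Fm.FV] using hy)]
      · intro hz; exact ⟨z, hz, h z (by simpa [Fm.FV] using hz)⟩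
  | just t X φ ih =>
      intro h
      simp only [Fm.rename]
      rw [ih ?_]
      rotate_left
      · intro z hz
        by_cases hzX : z ∈ X
        · simp only [if_pos hzX]; exact h z (by simpa [Fm.FV] using hzX)
        · simp [hzX]
      congr 1
      ext z
      simp only [Finset.mem_image]
      constructor
      · rintro ⟨y, hy, rfl⟩; rwa [h y (by simpa [Fm.FV] using hy)]
      · intro hz; exact ⟨z, hz, h z (by simpa [Fm.FV] using hz)⟩
lemma FV_rename_subset (σ : ℕ → ℕ) : ∀ (φ : Fm), (φ.rename σ).FV ⊆ φ.FV.image σ := by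
  intro φ
  induction φ generalizing σ with
  | atom P l =>
      intro z hz
      simp only [Fm.rename, Fm.FV, List.mem_toFinset, List.mem_map] at hz
      rcases hz with ⟨y, hy, rfl⟩
      exact Finset.mem_image.2 ⟨y, by simpa [Fm.FV] using hy, rfl⟩
  | neg φ ih => simpa [Fm.rename, Fm.FV] using ih σ
  | and φ ψ ih1 ih2 =>
      simp only [Fm.rename, Fm.FV, Finset.image_union]
      exact Finset.union_subset_union (ih1 σ) (ih2 σ)
  | imp φ ψ ih1 ih2 =>
      simp only [Fm.rename, Fm.FV, Finset.image_union]
      exact Finset.union_subset_union (ih1 σ) (ih2 σ)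
  | iff φ ψ ih1 ih2 =>
      simp only [Fm.rename, Fm.FV, Finset.image_union]
      exact Finset.union_subset_union (ih1 σ) (ih2 σ)
  | all x φ ih =>
      simp only [Fm.rename, Fm.FV]
      intro z hz
      rcases Finset.mem_erase.1 hz with ⟨hzx, hz⟩
      rcases Finset.mem_image.1 (ih _ hz) with ⟨y, hy, hyz⟩
      by_cases hyx : y = x
      · subst hyx; simp at hyz; omega
      · refine Finset.mem_image.2 ⟨y, Finset.mem_erase.2 ⟨hyx, hy⟩, ?_⟩
        rw [← hyz]; simp [Function.update_apply, hyx]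
  | box X φ ih => simp [Fm.rename, Fm.FV]
  | just t X φ ih => simp [Fm.rename, Fm.FV]

lemma BV_rename_subset (σ : ℕ → ℕ) : ∀ (φ : Fm),
    (φ.rename σ).BV ⊆ φ.BV ∪ φ.FV.image σ := by
  intro φ
  induction φ generalizing σ with
  | atom P l => simp [Fm.rename, Fm.BV]
  | neg φ ih => simpa [Fm.rename, Fm.BV, Fm.FV] using ih σ
  | and φ ψ ih1 ih2 =>
      simp only [Fm.rename, Fm.BV, Fm.FV, Finset.image_union]
      intro z hz
      rcases Finset.mem_union.1 hz with hz | hz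
      · have := ih1 σ hz
        rw [Finset.mem_union] at this ⊢
        rcases this with h | h
        · exact Or.inl (Finset.mem_union_left _ h)
        · exact Or.inr (Finset.mem_union_left _ h)
      · have := ih2 σ hz
        rw [Finset.mem_union] at this ⊢
        rcases this with h | h
        · exact Or.inl (Finset.mem_union_right _ h)
        · exact Or.inr (Finset.mem_union_right _ h)
  | imp φ ψ ih1 ih2 =>
      simp only [Fm.rename, Fm.BV, Fm.FV, Finset.image_union]
      intro z hz
      rcases Finset.mem_union.1 hz with hz | hz
      · have := ih1 σ hz
        rw [Finset.mem_union] at this ⊢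
        rcases this with h | h
        · exact Or.inl (Finset.mem_union_left _ h)
        · exact Or.inr (Finset.mem_union_left _ h)
      · have := ih2 σ hz
        rw [Finset.mem_union] at this ⊢
        rcases this with h | h
        · exact Or.inl (Finset.mem_union_right _ h)
        · exact Or.inr (Finset.mem_union_right _ h)
  | iff φ ψ ih1 ih2 =>
      simp only [Fm.rename, Fm.BV, Fm.FV, Finset.image_union]
      intro z hz
      rcases Finset.mem_union.1 hz with hz | hz
      · have := ih1 σ hz
        rw [Finset.mem_union] at this ⊢
        rcases this with h | h
        · exact Or.inl (Finset.mem_union_left _ h)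
        · exact Or.inr (Finset.mem_union_left _ h)
      · have := ih2 σ hz
        rw [Finset.mem_union] at this ⊢
        rcases this with h | h
        · exact Or.inl (Finset.mem_union_right _ h)
        · exact Or.inr (Finset.mem_union_right _ h)
  | all x φ ih =>
      simp only [Fm.rename, Fm.BV, Fm.FV]
      intro z hz
      rcases Finset.mem_insert.1 hz with rfl | hz
      · exact Finset.mem_union_left _ (Finset.mem_insert_self _ _)
      · have := ih (Function.update σ x x) hz
        rw [Finset.mem_union] at this ⊢
        rcases this with h | h
        · exact Or.inl (Finset.mem_insert_of_mem h)
        · rcases Finset.mem_image.1 h with ⟨y, hy, hyz⟩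
          by_cases hyx : y = x
          · subst hyx; simp at hyz
            exact Or.inl (by rw [← hyz]; exact Finset.mem_insert_self _ _)
          · rw [Function.update_apply, if_neg hyx] at hyz
            exact Or.inr (Finset.mem_image.2 ⟨y, Finset.mem_erase.2 ⟨hyx, hy⟩, hyz⟩)
  | box X φ ih =>
      simp only [Fm.rename, Fm.BV, Fm.FV]
      intro z hz
      rcases Finset.mem_union.1 hz with hz | hz
      · rcases Finset.mem_sdiff.1 hz with ⟨hz1, hz2⟩
        rcases Finset.mem_image.1 (FV_rename_subset _ φ hz1) with ⟨y, hy, hyz⟩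
        by_cases hyX : y ∈ X
        · exfalso; exact hz2 (Finset.mem_image.2 ⟨y, hyX, by simpa [hyX] using hyz⟩)
        · simp only [if_neg hyX] at hyz
          subst hyz
          exact Finset.mem_union_left _
            (Finset.mem_union_left _ (Finset.mem_sdiff.2 ⟨hy, hyX⟩))
      · have := ih _ hz
        rw [Finset.mem_union] at this ⊢
        rcases this with h | h
        · exact Or.inl (Finset.mem_union_right _ h)
        · rcases Finset.mem_image.1 h with ⟨y, hy, hyz⟩
          by_cases hyX : y ∈ X
          · exact Or.inr (Finset.mem_image.2 ⟨y, hyX, by simpa [hyX] using hyz⟩)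
          · simp only [if_neg hyX] at hyz
            subst hyz
            exact Or.inl (Finset.mem_union_left _ (Finset.mem_sdiff.2 ⟨hy, hyX⟩))
  | just t X φ ih =>
      simp only [Fm.rename, Fm.BV, Fm.FV]
      intro z hz
      rcases Finset.mem_union.1 hz with hz | hz
      · rcases Finset.mem_union.1 hz with hz | hz
        · rcases Finset.mem_sdiff.1 hz with ⟨hz1, hz2⟩
          rcases Finset.mem_image.1 (FV_rename_subset _ φ hz1) with ⟨y, hy, hyz⟩
          by_cases hyX : y ∈ X
          · exfalso; exact hz2 (Finset.mem_image.2 ⟨y, hyX, by simpa [hyX] using hyz⟩)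
          · simp only [if_neg hyX] at hyz
            subst hyz
            exact Finset.mem_union_left _ (Finset.mem_union_left _
              (Finset.mem_union_left _ (Finset.mem_sdiff.2 ⟨hy, hyX⟩)))
        · have := ih _ hz
          rw [Finset.mem_union] at this
          rcases this with h | h
          · exact Finset.mem_union_left _
              (Finset.mem_union_left _ (Finset.mem_union_right _ h))
          · rcases Finset.mem_image.1 h with ⟨y, hy, hyz⟩
            by_cases hyX : y ∈ X
            · exact Finset.mem_union_right _
                (Finset.mem_image.2 ⟨y, hyX, by simpa [hyX] using hyz⟩)
            · simp only [if_neg hyX] at hyz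
              subst hyz
              exact Finset.mem_union_left _ (Finset.mem_union_left _
                (Finset.mem_union_left _ (Finset.mem_sdiff.2 ⟨hy, hyX⟩)))
      · exact Finset.mem_union_left _ (Finset.mem_union_right _ hz)
lemma rename_comp : ∀ (φ : Fm) (σ τ : ℕ → ℕ), Admissible τ φ →
    (φ.rename τ).rename σ = φ.rename (fun z => σ (τ z)) := by
  intro φ
  induction φ with
  | atom P l => intro σ τ _; simp [Fm.rename, List.map_map]
  | neg φ ih => intro σ τ h; simp only [Fm.rename]; rw [ih σ τ h]
  | and φ ψ ih1 ih2 =>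
      intro σ τ h; simp only [Fm.rename]
      rw [ih1 σ τ h.1, ih2 σ τ h.2]
  | imp φ ψ ih1 ih2 =>
      intro σ τ h; simp only [Fm.rename]
      rw [ih1 σ τ h.1, ih2 σ τ h.2]
  | iff φ ψ ih1 ih2 =>
      intro σ τ h; simp only [Fm.rename]
      rw [ih1 σ τ h.1, ih2 σ τ h.2]
  | all x φ ih =>
      intro σ τ h
      rcases h with ⟨h1, h2⟩
      simp only [Fm.rename, Fm.all.injEq, true_and]
      rw [ih _ _ h1]
      apply rename_congr
      intro z hz
      by_cases hzx : z = x
      · subst hzx; rw [Function.update_self, Function.update_self, Function.update_self]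
      · simp only [Function.update_apply, if_neg hzx]
        have hτ : τ z ≠ x := h2 z (by simp [Fm.FV, Finset.mem_erase, hzx, hz])
        simp [hτ]
  | box X φ ih =>
      intro σ τ h
      rcases h with ⟨h1, h2⟩
      simp only [Fm.rename]
      rw [ih _ _ h1, Finset.image_image]
      congr 1
      apply rename_congr
      intro z hz
      by_cases hzX : z ∈ X
      · have : τ z ∈ X.image τ := Finset.mem_image_of_mem τ hzX
        simp [hzX, this]
      · simp only [if_neg hzX]
        have : z ∉ X.image τ := by
          intro hmem
          rcases Finset.mem_image.1 hmem with ⟨y, hy, hyz⟩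
          rcases h2 y hy with hin | hout
          · rw [hyz] at hin; exact hzX hin
          · rw [hyz] at hout; exact hout hz
        simp [this, hzX]
  | just t X φ ih =>
      intro σ τ h
      rcases h with ⟨h1, h2⟩
      simp only [Fm.rename]
      rw [ih _ _ h1, Finset.image_image]
      congr 1
      apply rename_congr
      intro z hz
      by_cases hzX : z ∈ X
      · have : τ z ∈ X.image τ := Finset.mem_image_of_mem τ hzX
        simp [hzX, this]
      · simp only [if_neg hzX]
        have : z ∉ X.image τ := by
          intro hmem
          rcases Finset.mem_image.1 hmem with ⟨y, hy, hyz⟩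
          rcases h2 y hy with hin | hout
          · rw [hyz] at hin; exact hzX hin
          · rw [hyz] at hout; exact hout hz
        simp [this, hzX]

lemma Adm_congr : ∀ (φ : Fm) {σ τ : ℕ → ℕ}, (∀ z ∈ φ.FV, σ z = τ z) →
    Admissible σ φ → Admissible τ φ := by
  intro φ
  induction φ with
  | atom P l => intro σ τ _ _; trivial
  | neg φ ih => intro σ τ h hσ; exact ih h hσ
  | and φ ψ ih1 ih2 =>
      intro σ τ h hσ
      exact ⟨ih1 (fun z hz => h z (by simp [Fm.FV, hz])) hσ.1,
        ih2 (fun z hz => h z (by simp [Fm.FV, hz])) hσ.2⟩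
  | imp φ ψ ih1 ih2 =>
      intro σ τ h hσ
      exact ⟨ih1 (fun z hz => h z (by simp [Fm.FV, hz])) hσ.1,
        ih2 (fun z hz => h z (by simp [Fm.FV, hz])) hσ.2⟩
  | iff φ ψ ih1 ih2 =>
      intro σ τ h hσ
      exact ⟨ih1 (fun z hz => h z (by simp [Fm.FV, hz])) hσ.1,
        ih2 (fun z hz => h z (by simp [Fm.FV, hz])) hσ.2⟩
  | all x φ ih =>
      intro σ τ h hσ
      refine ⟨ih ?_ hσ.1, ?_⟩
      · intro z hz
        by_cases hzx : z = x
        · subst hzx; simp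
        · simp only [Function.update_apply, if_neg hzx]
          exact h z (by simp [Fm.FV, Finset.mem_erase, hzx, hz])
      · intro z hz
        rw [← h z hz]
        exact hσ.2 z hz
  | box X φ ih =>
      intro σ τ h hσ
      refine ⟨ih ?_ hσ.1, ?_⟩
      · intro z hz
        by_cases hzX : z ∈ X
        · simp only [if_pos hzX]; exact h z (by simpa [Fm.FV] using hzX)
        · simp [hzX]
      · intro z hz
        rw [← h z (by simpa [Fm.FV] using hz)]
        exact hσ.2 z hz
  | just t X φ ih =>
      intro σ τ h hσ
      refine ⟨ih ?_ hσ.1, ?_⟩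
      · intro z hz
        by_cases hzX : z ∈ X
        · simp only [if_pos hzX]; exact h z (by simpa [Fm.FV] using hzX)
        · simp [hzX]
      · intro z hz
        rw [← h z (by simpa [Fm.FV] using hz)]
        exact hσ.2 z hz

lemma Adm_of_notBV : ∀ (φ : Fm) (σ : ℕ → ℕ), (∀ z, σ z = z ∨ σ z ∉ φ.BV) →
    Admissible σ φ := by
  intro φ
  induction φ with
  | atom P l => intro σ _; trivial
  | neg φ ih => intro σ h; exact ih σ (by simpa [Fm.BV] using h)
  | and φ ψ ih1 ih2 =>
      intro σ h
      constructor
      · refine ih1 σ (fun z => ?_)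
        rcases h z with h' | h'
        · exact Or.inl h'
        · exact Or.inr (fun hmem => h' (by simp [Fm.BV, hmem]))
      · refine ih2 σ (fun z => ?_)
        rcases h z with h' | h'
        · exact Or.inl h'
        · exact Or.inr (fun hmem => h' (by simp [Fm.BV, hmem]))
  | imp φ ψ ih1 ih2 =>
      intro σ h
      constructor
      · refine ih1 σ (fun z => ?_)
        rcases h z with h' | h'
        · exact Or.inl h'
        · exact Or.inr (fun hmem => h' (by simp [Fm.BV, hmem]))
      · refine ih2 σ (fun z => ?_)
        rcases h z with h' | h'
        · exact Or.inl h'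
        · exact Or.inr (fun hmem => h' (by simp [Fm.BV, hmem]))
  | iff φ ψ ih1 ih2 =>
      intro σ h
      constructor
      · refine ih1 σ (fun z => ?_)
        rcases h z with h' | h'
        · exact Or.inl h'
        · exact Or.inr (fun hmem => h' (by simp [Fm.BV, hmem]))
      · refine ih2 σ (fun z => ?_)
        rcases h z with h' | h'
        · exact Or.inl h'
        · exact Or.inr (fun hmem => h' (by simp [Fm.BV, hmem]))
  | all x φ ih =>
      intro σ h
      constructor
      · refine ih _ (fun z => ?_)
        by_cases hzx : z = x
        · subst hzx; simp
        · simp only [Function.update_apply, if_neg hzx]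
          rcases h z with h' | h'
          · exact Or.inl h'
          · exact Or.inr (fun hmem => h' (by simp [Fm.BV, hmem]))
      · intro z hz
        rcases h z with h' | h'
        · rw [h']; exact (Finset.mem_erase.1 hz).1
        · intro heq; exact h' (by simp [Fm.BV, heq])
  | box X φ ih =>
      intro σ h
      constructor
      · refine ih _ (fun z => ?_)
        by_cases hzX : z ∈ X
        · simp only [if_pos hzX]
          rcases h z with h' | h'
          · exact Or.inl h'
          · exact Or.inr (fun hmem => h' (by simp [Fm.BV, hmem]))
        · simp [hzX]
      · intro z hz
        rcases h z with h' | h'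
        · rw [h']; exact Or.inl hz
        · by_cases hX : σ z ∈ X
          · exact Or.inl hX
          · right
            intro hmem
            exact h' (by
              simp only [Fm.BV, Finset.mem_union]
              exact Or.inl (Finset.mem_sdiff.2 ⟨hmem, hX⟩))
  | just t X φ ih =>
      intro σ h
      constructor
      · refine ih _ (fun z => ?_)
        by_cases hzX : z ∈ X
        · simp only [if_pos hzX]
          rcases h z with h' | h'
          · exact Or.inl h'
          · exact Or.inr (fun hmem => h' (by simp [Fm.BV, hmem]))
        · simp [hzX]
      · intro z hz
        rcases h z with h' | h'
        · rw [h']; exact Or.inl hz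
        · by_cases hX : σ z ∈ X
          · exact Or.inl hX
          · right
            intro hmem
            exact h' (by
              simp only [Fm.BV, Finset.mem_union]
              exact Or.inl (Or.inl (Finset.mem_sdiff.2 ⟨hmem, hX⟩)))
lemma Adm_perturb (T : Finset ℕ) : ∀ (φ : Fm) (σ μ : ℕ → ℕ), Admissible σ φ →
    φ.vars ⊆ T → (∀ z ∈ φ.FV, μ z = σ z ∨ μ z ∉ T) → Admissible μ φ := by
  intro φ
  induction φ with
  | atom P l => intro σ μ _ _ _; trivial
  | neg φ ih => intro σ μ h hT hμ; exact ih σ μ h hT hμ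
  | and φ ψ ih1 ih2 =>
      intro σ μ h hT hμ
      refine ⟨ih1 σ μ h.1 (fun z hz => hT (by simp [Fm.vars, hz]))
        (fun z hz => hμ z (by simp [Fm.FV, hz])),
        ih2 σ μ h.2 (fun z hz => hT (by simp [Fm.vars, hz]))
        (fun z hz => hμ z (by simp [Fm.FV, hz]))⟩
  | imp φ ψ ih1 ih2 =>
      intro σ μ h hT hμ
      refine ⟨ih1 σ μ h.1 (fun z hz => hT (by simp [Fm.vars, hz]))
        (fun z hz => hμ z (by simp [Fm.FV, hz])),
        ih2 σ μ h.2 (fun z hz => hT (by simp [Fm.vars, hz]))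
        (fun z hz => hμ z (by simp [Fm.FV, hz]))⟩
  | iff φ ψ ih1 ih2 =>
      intro σ μ h hT hμ
      refine ⟨ih1 σ μ h.1 (fun z hz => hT (by simp [Fm.vars, hz]))
        (fun z hz => hμ z (by simp [Fm.FV, hz])),
        ih2 σ μ h.2 (fun z hz => hT (by simp [Fm.vars, hz]))
        (fun z hz => hμ z (by simp [Fm.FV, hz]))⟩
  | all x φ ih =>
      intro σ μ h hT hμ
      have hxT : x ∈ T := hT (by simp [Fm.vars])
      refine ⟨ih _ _ h.1 (fun z hz => hT (by simp [Fm.vars, hz])) ?_, ?_⟩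
      · intro z hz
        by_cases hzx : z = x
        · subst hzx; simp
        · simp only [Function.update_apply, if_neg hzx]
          exact hμ z (by simp [Fm.FV, Finset.mem_erase, hzx, hz])
      · intro z hz
        rcases hμ z hz with h' | h'
        · rw [h']; exact h.2 z hz
        · intro heq; rw [heq] at h'; exact h' hxT
  | box X φ ih =>
      intro σ μ h hT hμ
      refine ⟨ih _ _ h.1 (fun z hz => hT (by simp [Fm.vars, hz])) ?_, ?_⟩
      · intro z hz
        by_cases hzX : z ∈ X
        · simp only [if_pos hzX]
          exact hμ z (by simpa [Fm.FV] using hzX)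
        · simp [hzX]
      · intro z hz
        rcases hμ z (by simpa [Fm.FV] using hz) with h' | h'
        · rw [h']; exact h.2 z hz
        · right
          intro hmem
          exact h' (hT (by simp [Fm.vars, FV_subset_vars φ hmem]))
  | just t X φ ih =>
      intro σ μ h hT hμ
      refine ⟨ih _ _ h.1 (fun z hz => hT (by simp [Fm.vars, hz])) ?_, ?_⟩
      · intro z hz
        by_cases hzX : z ∈ X
        · simp only [if_pos hzX]
          exact hμ z (by simpa [Fm.FV] using hzX)
        · simp [hzX]
      · intro z hz
        rcases hμ z (by simpa [Fm.FV] using hz) with h' | h'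
        · rw [h']; exact h.2 z hz
        · right
          intro hmem
          exact h' (hT (by simp [Fm.vars, FV_subset_vars φ hmem]))

/-- Key lemma: substituting a fresh variable `u` (introduced by `μ`) by `v = σ z₀`
is admissible on the renamed formula, given that `σ` is admissible. -/
lemma Adm_single : ∀ (φ : Fm) (σ μ : ℕ → ℕ) (u v : ℕ), Admissible σ φ →
    (∀ z ∈ φ.FV, μ z = u → σ z = v) → u ∉ φ.vars → (∀ z ∈ φ.FV, σ z ≠ u) →
    Admissible (fun z => if z = u then v else z) (φ.rename μ) := by
  intro φ
  induction φ with
  | atom P l => intro σ μ u v _ _ _ _; trivial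
  | neg φ ih => intro σ μ u v h c2 c3 c4; exact ih σ μ u v h c2 c3 c4
  | and φ ψ ih1 ih2 =>
      intro σ μ u v h c2 c3 c4
      exact ⟨ih1 σ μ u v h.1 (fun z hz => c2 z (by simp [Fm.FV, hz]))
          (fun hm => c3 (by simp [Fm.vars, hm])) (fun z hz => c4 z (by simp [Fm.FV, hz])),
        ih2 σ μ u v h.2 (fun z hz => c2 z (by simp [Fm.FV, hz]))
          (fun hm => c3 (by simp [Fm.vars, hm])) (fun z hz => c4 z (by simp [Fm.FV, hz]))⟩
  | imp φ ψ ih1 ih2 =>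
      intro σ μ u v h c2 c3 c4
      exact ⟨ih1 σ μ u v h.1 (fun z hz => c2 z (by simp [Fm.FV, hz]))
          (fun hm => c3 (by simp [Fm.vars, hm])) (fun z hz => c4 z (by simp [Fm.FV, hz])),
        ih2 σ μ u v h.2 (fun z hz => c2 z (by simp [Fm.FV, hz]))
          (fun hm => c3 (by simp [Fm.vars, hm])) (fun z hz => c4 z (by simp [Fm.FV, hz]))⟩
  | iff φ ψ ih1 ih2 =>
      intro σ μ u v h c2 c3 c4
      exact ⟨ih1 σ μ u v h.1 (fun z hz => c2 z (by simp [Fm.FV, hz]))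
          (fun hm => c3 (by simp [Fm.vars, hm])) (fun z hz => c4 z (by simp [Fm.FV, hz])),
        ih2 σ μ u v h.2 (fun z hz => c2 z (by simp [Fm.FV, hz]))
          (fun hm => c3 (by simp [Fm.vars, hm])) (fun z hz => c4 z (by simp [Fm.FV, hz]))⟩
  | all x φ ih =>
      intro σ μ u v h c2 c3 c4
      have hux : u ≠ x := by
        intro hux; exact c3 (by simp [Fm.vars, hux])
      constructor
      · -- Admissible (update (u↦v) x x) (φ.rename (update μ x x))
        have hmain : Admissible (fun z => if z = u then v else z)
            (φ.rename (Function.update μ x x)) := by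
          apply ih (Function.update σ x x) _ u v h.1
          · intro z hz hzu
            by_cases hzx : z = x
            · subst hzx; simp at hzu; exact absurd hzu.symm hux
            · rw [Function.update_apply, if_neg hzx] at hzu ⊢
              exact c2 z (Finset.mem_erase.2 ⟨hzx, hz⟩) hzu
          · intro hm; exact c3 (by simp [Fm.vars, hm])
          · intro z hz
            by_cases hzx : z = x
            · subst hzx; simp; exact fun hc => hux hc.symm
            · rw [Function.update_apply, if_neg hzx]
              exact c4 z (Finset.mem_erase.2 ⟨hzx, hz⟩)
        apply Adm_congr _ _ hmain
        intro z _
        by_cases hzx : z = x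
        · subst hzx; simp [Ne.symm hux]
        · simp [Function.update_apply, hzx]
      · intro z hz
        rcases Finset.mem_erase.1 hz with ⟨hzx, hzFV⟩
        by_cases hzu : z = u
        · subst hzu
          simp only [if_pos rfl]
          rcases Finset.mem_image.1 (FV_rename_subset _ φ hzFV) with ⟨z₀, hz₀, hz₀e⟩
          by_cases hz₀x : z₀ = x
          · subst hz₀x; simp at hz₀e; exact absurd hz₀e hux.symm
          · rw [Function.update_apply, if_neg hz₀x] at hz₀e
            have hσ : σ z₀ = v := c2 z₀ (Finset.mem_erase.2 ⟨hz₀x, hz₀⟩) hz₀e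
            have := h.2 z₀ (Finset.mem_erase.2 ⟨hz₀x, hz₀⟩)
            rwa [hσ] at this
        · simp [hzu, hzx]
  | box X φ ih =>
      intro σ μ u v h c2 c3 c4
      have huφ : u ∉ φ.vars := fun hm => c3 (by simp [Fm.vars, hm])
      have huX : u ∉ X := fun hm => c3 (by simp [Fm.vars, hm])
      constructor
      · by_cases huI : u ∈ X.image μ
        · have hmain : Admissible (fun z => if z = u then v else z)
              (φ.rename (fun z => if z ∈ X then μ z else z)) := by
            apply ih (fun z => if z ∈ X then σ z else z) _ u v h.1
            · intro z hz hzu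
              by_cases hzX : z ∈ X
              · rw [if_pos hzX] at hzu ⊢
                exact c2 z (by simpa [Fm.FV] using hzX) hzu
              · rw [if_neg hzX] at hzu
                exact absurd hzu (by rintro rfl; exact huφ (FV_subset_vars φ hz))
            · exact huφ
            · intro z hz
              by_cases hzX : z ∈ X
              · rw [if_pos hzX]; exact c4 z (by simpa [Fm.FV] using hzX)
              · rw [if_neg hzX]; rintro rfl; exact huφ (FV_subset_vars φ hz)
          apply Adm_congr _ _ hmain
          intro z _
          by_cases hzI : z ∈ X.image μ
          · simp [hzI]
          · have hzu : z ≠ u := by rintro rfl; exact hzI huI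
            simp [hzI, hzu]
        · apply Adm_of_notBV
          intro z
          left
          by_cases hzI : z ∈ X.image μ
          · have hzu : z ≠ u := by rintro rfl; exact huI hzI
            simp [hzI, hzu]
          · simp [hzI]
      · intro z hz
        by_cases hzu : z = u
        · subst hzu
          simp only [if_pos rfl]
          rcases Finset.mem_image.1 hz with ⟨z₀, hz₀X, hz₀e⟩
          have hσv : σ z₀ = v := c2 z₀ (by simpa [Fm.FV] using hz₀X) hz₀e
          by_cases hvFV : v ∈ (φ.rename (fun z => if z ∈ X then μ z else z)).FV
          · left
            rcases Finset.mem_image.1 (FV_rename_subset _ φ hvFV) with ⟨y, hy, hye⟩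
            by_cases hyX : y ∈ X
            · rw [if_pos hyX] at hye
              exact Finset.mem_image.2 ⟨y, hyX, hye⟩
            · rw [if_neg hyX] at hye
              subst hye
              rcases h.2 z₀ (by simpa [Fm.FV] using hz₀X) with hin | hout
              · rw [hσv] at hin; exact absurd hin hyX
              · rw [hσv] at hout; exact absurd hy hout
          · exact Or.inr hvFV
        · simp [hzu, hz]
  | just t X φ ih =>
      intro σ μ u v h c2 c3 c4
      have huφ : u ∉ φ.vars := fun hm => c3 (by simp [Fm.vars, hm])
      constructor
      · by_cases huI : u ∈ X.image μ
        · have hmain : Admissible (fun z => if z = u then v else z)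
              (φ.rename (fun z => if z ∈ X then μ z else z)) := by
            apply ih (fun z => if z ∈ X then σ z else z) _ u v h.1
            · intro z hz hzu
              by_cases hzX : z ∈ X
              · rw [if_pos hzX] at hzu ⊢
                exact c2 z (by simpa [Fm.FV] using hzX) hzu
              · rw [if_neg hzX] at hzu
                exact absurd hzu (by rintro rfl; exact huφ (FV_subset_vars φ hz))
            · exact huφ
            · intro z hz
              by_cases hzX : z ∈ X
              · rw [if_pos hzX]; exact c4 z (by simpa [Fm.FV] using hzX)
              · rw [if_neg hzX]; rintro rfl; exact huφ (FV_subset_vars φ hz)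
          apply Adm_congr _ _ hmain
          intro z _
          by_cases hzI : z ∈ X.image μ
          · simp [hzI]
          · have hzu : z ≠ u := by rintro rfl; exact hzI huI
            simp [hzI, hzu]
        · apply Adm_of_notBV
          intro z
          left
          by_cases hzI : z ∈ X.image μ
          · have hzu : z ≠ u := by rintro rfl; exact huI hzI
            simp [hzI, hzu]
          · simp [hzI]
      · intro z hz
        by_cases hzu : z = u
        · subst hzu
          simp only [if_pos rfl]
          rcases Finset.mem_image.1 hz with ⟨z₀, hz₀X, hz₀e⟩
          have hσv : σ z₀ = v := c2 z₀ (by simpa [Fm.FV] using hz₀X) hz₀e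
          by_cases hvFV : v ∈ (φ.rename (fun z => if z ∈ X then μ z else z)).FV
          · left
            rcases Finset.mem_image.1 (FV_rename_subset _ φ hvFV) with ⟨y, hy, hye⟩
            by_cases hyX : y ∈ X
            · rw [if_pos hyX] at hye
              exact Finset.mem_image.2 ⟨y, hyX, hye⟩
            · rw [if_neg hyX] at hye
              subst hye
              rcases h.2 z₀ (by simpa [Fm.FV] using hz₀X) with hin | hout
              · rw [hσv] at hin; exact absurd hin hyX
              · rw [hσv] at hout; exact absurd hy hout
          · exact Or.inr hvFV
        · simp [hzu, hz]
lemma d_weak {CS : Set Fm} {V : Set ℕ} {Γ : Set Fm} {φ ψ : Fm}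
    (h : Deriv CS V Γ ψ) : Deriv CS V Γ (φ.imp ψ) :=
  (Deriv.ax (FAxiom.pK ψ φ)).mp h

lemma d_id {CS : Set Fm} {V : Set ℕ} {Γ : Set Fm} (φ : Fm) :
    Deriv CS V Γ (φ.imp φ) :=
  ((Deriv.ax (FAxiom.pS φ (φ.imp φ) φ)).mp
    (Deriv.ax (FAxiom.pK φ (φ.imp φ)))).mp (Deriv.ax (FAxiom.pK φ φ))

lemma d_comp {CS : Set Fm} {V : Set ℕ} {Γ : Set Fm} {φ ψ χ : Fm}
    (h1 : Deriv CS V Γ (φ.imp ψ)) (h2 : Deriv CS V Γ (ψ.imp χ)) :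
    Deriv CS V Γ (φ.imp χ) :=
  ((Deriv.ax (FAxiom.pS φ ψ χ)).mp (d_weak h2)).mp h1

lemma deduction_aux {CS : Set Fm} {V : Set ℕ} {Γ' : Set Fm} {ψ : Fm}
    (h : Deriv CS V Γ' ψ) :
    ∀ (φ : Fm) (Γ : Set Fm), Γ' = insert φ Γ → Deriv CS V Γ (φ.imp ψ) := by
  induction h with
  | hyp hmem =>
      intro φ Γ hEq
      subst hEq
      rcases hmem with rfl | hmem
      · exact d_id _
      · exact d_weak (Deriv.hyp hmem)
  | ax hax => intro φ Γ _; exact d_weak (Deriv.ax hax)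
  | cs hcs => intro φ Γ _; exact d_weak (Deriv.cs hcs)
  | mp h1 h2 ih1 ih2 =>
      intro φ Γ hEq
      exact ((Deriv.ax (FAxiom.pS _ _ _)).mp (ih1 φ Γ hEq)).mp (ih2 φ Γ hEq)
  | gen hxV hfv h ih =>
      intro φ Γ hEq
      subst hEq
      rename_i χ x
      have hxφ : x ∉ φ.FV := hfv φ (Set.mem_insert _ _)
      have hgen : Deriv CS V Γ (Fm.all x (φ.imp χ)) :=
        Deriv.gen hxV (fun ρ hρ => hfv ρ (Set.mem_insert_of_mem _ hρ)) (ih φ Γ rfl)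
      have h1 : Deriv CS V Γ ((Fm.all x φ).imp (Fm.all x χ)) :=
        (Deriv.ax (FAxiom.allImp x φ χ)).mp hgen
      exact d_comp (Deriv.ax (FAxiom.allVac x φ hxφ)) h1
  | nec h _ =>
      intro φ Γ _
      exact d_weak (Deriv.nec h)

lemma deduction {CS : Set Fm} {V : Set ℕ} {Γ : Set Fm} {φ ψ : Fm}
    (h : Deriv CS V (insert φ Γ) ψ) : Deriv CS V Γ (φ.imp ψ) :=
  deduction_aux h φ Γ rfl

lemma subst_one {CS : Set Fm} {χ : Fm} {x v : ℕ} (h : Deriv CS ∅ ∅ χ)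
    (hadm : Admissible (fun z => if z = x then v else z) χ) :
    Deriv CS ∅ ∅ (χ.subst1 x v) :=
  (Deriv.ax (FAxiom.allE x v χ hadm)).mp
    (Deriv.gen (Set.notMem_empty x) (fun ψ hψ => absurd hψ (Set.notMem_empty ψ)) h)
lemma rename_theorem {CS : Set Fm} (Ψ : Fm) (σ : ℕ → ℕ) (hadm : Admissible σ Ψ)
    (h : Deriv CS ∅ ∅ Ψ) : Deriv CS ∅ ∅ (Ψ.rename σ) := by
  classical
  set T : Finset ℕ := Ψ.vars ∪ Ψ.FV.image σ with hTdef
  have hvT : Ψ.vars ⊆ T := Finset.subset_union_left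
  have hσT : ∀ z ∈ Ψ.FV, σ z ∈ T :=
    fun z hz => Finset.mem_union_right _ (Finset.mem_image_of_mem σ hz)
  set B : ℕ := T.sup id + 1 with hBdef
  have hB : ∀ w ∈ T, w < B := by
    intro w hw
    have : w ≤ T.sup id := Finset.le_sup (f := id) hw
    omega
  have hBT : ∀ z, B + z ∉ T := fun z hmem => by have := hB _ hmem; omega
  -- Stage A: replace the free variables of Ψ by fresh variables B + z.
  have stageA : ∀ s : Finset ℕ, s ⊆ Ψ.FV →
      Deriv CS ∅ ∅ (Ψ.rename (fun z => if z ∈ s then B + z else z)) := by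
    intro s
    induction s using Finset.induction_on with
    | empty =>
        intro _
        rw [rename_id' Ψ (by intro z _; simp)]
        exact h
    | @insert x s hx ih =>
        intro hins
        have hs : s ⊆ Ψ.FV := fun z hz => hins (Finset.mem_insert_of_mem hz)
        have hxFV : x ∈ Ψ.FV := hins (Finset.mem_insert_self _ _)
        have hder := ih hs
        have hadmμs : Admissible (fun z => if z ∈ s then B + z else z) Ψ := by
          refine Adm_perturb T Ψ (fun z => z) _ (Adm_of_notBV Ψ _ (fun z => Or.inl rfl)) hvT ?_
          intro z _
          by_cases hzs : z ∈ s
          · simp only [if_pos hzs]; exact Or.inr (hBT z)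
          · simp [hzs]
        have hadmstep : Admissible (fun z => if z = x then B + x else z)
            (Ψ.rename (fun z => if z ∈ s then B + z else z)) := by
          apply Adm_of_notBV
          intro z
          by_cases hzx : z = x
          · subst hzx
            right
            rw [if_pos rfl]
            intro hmem
            rcases Finset.mem_union.1 (BV_rename_subset _ Ψ hmem) with hm | hm
            · exact hBT _ (hvT (BV_subset_vars Ψ hm))
            · rcases Finset.mem_image.1 hm with ⟨y, hy, hye⟩
              by_cases hys : y ∈ s
              · rw [if_pos hys] at hye
                have : y = z := by omega
                subst this; exact hx hys
              · rw [if_neg hys] at hye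
                have : y ∈ T := hvT (FV_subset_vars Ψ hy)
                have := hB _ this
                omega
          · exact Or.inl (by simp [hzx])
        have hsub := subst_one hder hadmstep
        rw [Fm.subst1, rename_comp _ _ _ hadmμs] at hsub
        rw [rename_congr Ψ (τ := fun z => if z ∈ insert x s then B + z else z) ?_] at hsub
        · exact hsub
        · intro z hz
          by_cases hzs : z ∈ s
          · have hne : ¬ (B + z = x) := by
              have : x ∈ T := hvT (FV_subset_vars Ψ hxFV)
              have := hB _ this
              omega
            simp [hzs, hne, Finset.mem_insert_of_mem hzs]
          · by_cases hzx : z = x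
            · subst hzx; simp [hzs]
            · simp [hzs, hzx]
  -- Stage B: replace each fresh variable B + z by σ z.
  have stageB : ∀ s : Finset ℕ, s ⊆ Ψ.FV →
      Deriv CS ∅ ∅ (Ψ.rename
        (fun z => if z ∈ s then σ z else (if z ∈ Ψ.FV then B + z else z))) := by
    intro s
    induction s using Finset.induction_on with
    | empty =>
        have := stageA Ψ.FV (le_refl _)
        intro _
        rw [rename_congr Ψ (σ := fun z => if z ∈ Ψ.FV then B + z else z)
          (τ := fun z => if z ∈ (∅ : Finset ℕ) then σ z
            else (if z ∈ Ψ.FV then B + z else z)) (by intro z _; simp)] at this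
        exact this
    | @insert x s hx ih =>
        intro hins
        have hs : s ⊆ Ψ.FV := fun z hz => hins (Finset.mem_insert_of_mem hz)
        have hxFV : x ∈ Ψ.FV := hins (Finset.mem_insert_self _ _)
        have hder := ih hs
        set μ : ℕ → ℕ :=
          fun z => if z ∈ s then σ z else (if z ∈ Ψ.FV then B + z else z) with hμdef
        have hadmμ : Admissible μ Ψ := by
          refine Adm_perturb T Ψ σ _ hadm hvT ?_
          intro z hz
          by_cases hzs : z ∈ s
          · simp [hμdef, hzs]
          · simp only [hμdef, if_neg hzs, if_pos hz]
            exact Or.inr (hBT z)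
        have hadmstep : Admissible (fun z => if z = B + x then σ x else z)
            (Ψ.rename μ) := by
          apply Adm_single Ψ σ μ (B + x) (σ x) hadm
          · intro z hz he
            by_cases hzs : z ∈ s
            · rw [hμdef] at he
              simp only [if_pos hzs] at he
              have := hB _ (hσT z hz)
              omega
            · rw [hμdef] at he
              simp only [if_neg hzs, if_pos hz] at he
              have : z = x := by omega
              subst this; rfl
          · intro hmem
            exact hBT _ (hvT hmem)
          · intro z hz
            have := hB _ (hσT z hz)
            omega
        have hsub := subst_one hder hadmstep
        rw [Fm.subst1, rename_comp _ _ _ hadmμ] at hsub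
        rw [rename_congr Ψ
          (τ := fun z => if z ∈ insert x s then σ z
            else (if z ∈ Ψ.FV then B + z else z)) ?_] at hsub
        · exact hsub
        · intro z hz
          by_cases hzs : z ∈ s
          · have hne : ¬ (σ z = B + x) := by
              have := hB _ (hσT z hz)
              omega
            simp [hμdef, hzs, hne, Finset.mem_insert_of_mem hzs]
          · by_cases hzx : z = x
            · subst hzx
              simp [hμdef, hzs, hz]
            · have hne : ¬ (B + z = B + x) := by omega
              simp [hμdef, hzs, hzx, hz, hne]
  have := stageB Ψ.FV (le_refl _)
  rw [rename_congr Ψ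
    (τ := σ) (by intro z hz; simp [hz])] at this
  exact this
/-- The implication chain `Φ₁ → (Φ₂ → … → Φ)`. -/
def chain : ∀ {n : ℕ}, (Fin n → Fm) → Fm → Fm
  | 0, _, Φ => Φ
  | _ + 1, Φs, Φ => chain (Fin.tail Φs) ((Φs 0).imp Φ)

lemma set_succ {n : ℕ} (Φs : Fin (n + 1) → Fm) :
    {ψ | ∃ i, ψ = Φs i} = insert (Φs 0) {ψ | ∃ i : Fin n, ψ = Fin.tail Φs i} := by
  ext ψ
  simp only [Set.mem_setOf_eq, Set.mem_insert_iff, Fin.exists_fin_succ, Fin.tail]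

lemma collapse {CS : Set Fm} : ∀ (n : ℕ) (Φs : Fin n → Fm) (Φ : Fm),
    Deriv CS ∅ {ψ | ∃ i, ψ = Φs i} Φ → Deriv CS ∅ ∅ (chain Φs Φ) := by
  intro n
  induction n with
  | zero =>
      intro Φs Φ h
      have he : {ψ | ∃ i : Fin 0, ψ = Φs i} = (∅ : Set Fm) := by
        ext ψ; simp
      rw [he] at h
      exact h
  | succ n ih =>
      intro Φs Φ h
      rw [set_succ] at h
      exact ih _ _ (deduction h)

lemma adm_chain (σ : ℕ → ℕ) : ∀ (n : ℕ) (Φs : Fin n → Fm) (Φ : Fm),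
    Admissible σ Φ → (∀ i, Admissible σ (Φs i)) → Admissible σ (chain Φs Φ) := by
  intro n
  induction n with
  | zero => intro _ _ h _; exact h
  | succ n ih =>
      intro Φs Φ h hH
      exact ih _ _ ⟨hH 0, h⟩ (fun i => hH i.succ)

lemma rename_chain (σ : ℕ → ℕ) : ∀ (n : ℕ) (Φs : Fin n → Fm) (Φ : Fm),
    (chain Φs Φ).rename σ = chain (fun i => (Φs i).rename σ) (Φ.rename σ) := by
  intro n
  induction n with
  | zero => intro _ _; rfl
  | succ n ih =>
      intro Φs Φ
      show (chain (Fin.tail Φs) ((Φs 0).imp Φ)).rename σ = _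
      rw [ih]
      rfl

lemma peel {CS : Set Fm} {Γ : Set Fm} : ∀ (n : ℕ) (Φs : Fin n → Fm) (Φ : Fm),
    Deriv CS ∅ Γ (chain Φs Φ) → (∀ i, Deriv CS ∅ Γ (Φs i)) → Deriv CS ∅ Γ Φ := by
  intro n
  induction n with
  | zero => intro _ _ h _; exact h
  | succ n ih =>
      intro Φs Φ h hH
      exact (ih _ _ h (fun i => hH i.succ)).mp (hH 0)

end SubstAux

/-- Substitution lemma: for a variant-closed constant specification
`CS` and a collision-free substitution `σ` of individual variables,
`Φ₁,…,Φₙ ⊢_CS Φ` implies `Φ₁σ,…,Φₙσ ⊢_CS Φσ`. -/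
theorem substitution_lemma (CS : Set Fm) (hCS : IsCS CS) (hvc : VariantClosed CS)
    (σ : ℕ → ℕ) (n : ℕ) (Φs : Fin n → Fm) (Φ : Fm)
    (hadm : Admissible σ Φ) (hadmH : ∀ i, Admissible σ (Φs i))
    (h : Deriv CS ∅ {ψ | ∃ i, ψ = Φs i} Φ) :
    Deriv CS ∅ {ψ | ∃ i, ψ = (Φs i).rename σ} (Φ.rename σ) := by
  have hchain := SubstAux.collapse n Φs Φ h
  have hadmc : Admissible σ (SubstAux.chain Φs Φ) :=
    SubstAux.adm_chain σ n Φs Φ hadm hadmH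
  have hren := SubstAux.rename_theorem _ σ hadmc hchain
  rw [SubstAux.rename_chain] at hren
  have hG : Deriv CS ∅ {ψ | ∃ i, ψ = (Φs i).rename σ}
      (SubstAux.chain (fun i => (Φs i).rename σ) (Φ.rename σ)) :=
    (Deriv.ax (FAxiom.A3' ∅ _)).mp (Deriv.nec hren)
  exact SubstAux.peel n _ _ hG (fun i => Deriv.hyp ⟨i, rfl⟩)
end

section
/- Soundness of axiom (A2) for FOLP□: in every Fitting model M, the schema t:_X Φ → t:_{X∪{y}} Φ is true at every world under every valuation ν with ν(X∪{y}) ⊆ D_w. -/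
/-- soundness of axiom (A2): `t:_X Φ → t:_{X∪{y}} Φ` is true at
every world of every Fitting model under every valuation `ν` with
`ν(X∪{y}) ⊆ D_w`. -/
theorem soundness_A2 {Obj : Type} (M : PreModel Obj) (hM : IsFitting M)
    (t : JTerm) (X : Finset ℕ) (y : ℕ) (Φ : Fm) (ν : ℕ → Obj) (w : M.W)
    (hν : ∀ x ∈ insert y X, ν x ∈ M.D w) :
    Sat M ((Fm.just t X Φ).imp (Fm.just t (insert y X) Φ)) ν w := by
  obtain ⟨-, -, -, -, hmono, -, hE⟩ := hM
  obtain ⟨-, -, -, hext, -⟩ := hE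
  refine ⟨?_, ?_⟩
  · intro x hx
    simp only [Fm.FV] at hx
    apply hν
    rcases Finset.mem_union.1 hx with h | h
    · exact Finset.mem_insert_of_mem h
    · exact h
  · rintro ⟨hdom, hbox, hev⟩
    refine ⟨fun x hx => hν x hx, ?_, ?_⟩
    · intro u hru μ hμeq hμdom
      apply hbox u hru
      · intro x hx
        by_cases hxy : x ∈ Φ.FV \ insert y X
        · exact absurd hxy (by simp_all [Finset.mem_sdiff])
        · exact hμeq x hxy
      · intro x hx
        by_cases hxy : x ∈ Φ.FV \ insert y X
        · exact hμdom x hxy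
        · have hx' : x ∈ insert y X := by
            rcases Finset.mem_sdiff.1 hx with ⟨h1, h2⟩
            by_contra hc
            exact hxy (Finset.mem_sdiff.2 ⟨h1, hc⟩)
          rw [hμeq x hxy]
          exact hmono w u hru (hν x hx')
    · apply hext t Φ (FinVal.ofFun ν (Φ.FV ∩ X))
        (FinVal.ofFun ν (Φ.FV ∩ insert y X)) w hev
      · exact ⟨Finset.inter_subset_inter le_rfl (Finset.subset_insert y X),
          fun x _ => rfl⟩
      · rintro a ⟨x, hx, rfl⟩
        have : x ∈ Φ.FV ∩ insert y X := by simpa [FinVal.ofFun] using hx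
        exact hν x (Finset.mem_inter.1 this).2
end

section
/- Soundness of axiom (A6) for FOLP□: in every Fitting model, the schema t:_X Φ → !t:_X t:_X Φ is true at every world, using the !-condition and R-closure condition on the evidence function together with transitivity of R and monotonicity of domains. -/
/-- soundness of axiom (A6): `t:_X Φ → !t:_X t:_X Φ` is true in
every Fitting model. -/
theorem soundness_A6 {Obj : Type} (M : PreModel Obj) (hM : IsFitting M)
    (t : JTerm) (X : Finset ℕ) (Φ : Fm) :
    TrueIn M ((Fm.just t X Φ).imp (Fm.just t.bang X (Fm.just t X Φ))) := by
  obtain ⟨-, -, htrans, -, hmono, -, hE⟩ := hM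
  obtain ⟨-, -, hR, -, -, -, -, hbang, -⟩ := hE
  intro ν w hdom
  refine ⟨?_, ?_⟩
  · intro x hx
    apply hdom
    simp [Fm.FV] at hx ⊢
    exact hx
  intro hsat
  obtain ⟨hX, hsucc, hEv⟩ := hsat
  refine ⟨hX, ?_, ?_⟩
  · -- truth at all successors
    intro u hwu μ hμ hμd
    have hμeq : ∀ x, μ x = ν x := by
      intro x
      apply hμ
      simp [Fm.FV]
    refine ⟨?_, ?_, ?_⟩
    · intro x hx
      rw [hμeq x]
      exact hmono w u hwu (hX x hx)
    · intro v huv ρ hρ hρd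
      refine hsucc v (htrans w u v hwu huv) ρ ?_ hρd
      intro x hx
      rw [hρ x hx, hμeq x]
    · have : (FinVal.ofFun μ (Φ.FV ∩ X)) = (FinVal.ofFun ν (Φ.FV ∩ X)) := by
        simp [FinVal.ofFun, funext hμeq]
      rw [this]
      exact hR t Φ _ w u hwu hEv
  · -- evidence via ! condition
    have h := hbang t Φ (FinVal.ofFun ν (Φ.FV ∩ X)) (FinVal.ofFun ν X) X w hEv
      ⟨Finset.inter_subset_right, fun _ _ => rfl⟩
      (by
        rintro a ⟨x, hx, rfl⟩
        exact hX x (by simpa [FinVal.ofFun] using hx))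
      (by
        intro x hx
        simp [FinVal.ofFun] at hx ⊢
        exact hx.2.1)
      (by simp [FinVal.ofFun])
    have hfv : (Fm.just t X Φ).FV ∩ X = X := by simp [Fm.FV]
    simpa [hfv] using h
end
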